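/- For the triangular lattice: if S ⊆ ℤ² contains no two triangularly adjacent points, then the upper density of S is at most 1/3; moreover the set {x ∈ ℤ² : 3 ∣ (x₁ + x₂)} contains no two triangularly adjacent points and has density exactly 1/3. (Hence δ₆(0) = 1/3.) -/

import Mathlib

/-!
The triangles `{z, z + (1,0), z + (1,1)}` with `3 ∣ z₁ + z₂` tile `ℤ²`, and each of them is a
clique of the triangular lattice. An independent set meets each triangle at most once, so sending
a point to the corner `z` of its triangle embeds `S ∩ B_r` into `{3 ∣ z₁ + z₂} ∩ B_{r+1}`.
Counting the latter row by row, every row of `B_r` contributes a third of its `2r - 1` points up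
to an error of `2/3`, so it has `(2r - 1)²/3 + O(r)` points.
-/

open Filter Topology

/-- `y` is triangularly adjacent to `x` (triangular lattice modeled on `ℤ²`). -/
def IsTriNbr (x y : ℤ × ℤ) : Prop :=
  y - x ∈ ({(1, 0), (-1, 0), (0, 1), (0, -1), (1, 1), (-1, -1)} : Set (ℤ × ℤ))

/-- The box `B_r = {x : |x₁| < r, |x₂| < r}`. -/
def box (r : ℕ) : Set (ℤ × ℤ) :=
  {x | |x.1| < (r : ℤ) ∧ |x.2| < (r : ℤ)}

/-- The upper density of `S ⊆ ℤ²`: `limsup_{r → ∞} |S ∩ B_r| / (2r-1)²`. -/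
noncomputable def upperDensity (S : Set (ℤ × ℤ)) : ℝ :=
  limsup (fun r : ℕ => (Set.ncard (S ∩ box r) : ℝ) / (2 * (r : ℝ) - 1) ^ 2) atTop

/-- `S` has density `d`: the sequence `|S ∩ B_r| / (2r-1)²` tends to `d`. -/
def HasDensity (S : Set (ℤ × ℤ)) (d : ℝ) : Prop :=
  Tendsto (fun r : ℕ => (Set.ncard (S ∩ box r) : ℝ) / (2 * (r : ℝ) - 1) ^ 2) atTop (𝓝 d)

def mod3Sublattice : Set (ℤ × ℤ) := {x | 3 ∣ x.1 + x.2}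

lemma not_isTriNbr_of_mem_mod3Sublattice {x y : ℤ × ℤ} (hx : x ∈ mod3Sublattice)
    (hy : y ∈ mod3Sublattice) : ¬ IsTriNbr x y := by
  simp only [mod3Sublattice, Set.mem_ofPred_eq] at hx hy
  simp only [IsTriNbr, Set.mem_insert_iff, Set.mem_singleton_iff, Prod.ext_iff, Prod.fst_sub,
    Prod.snd_sub]
  omega

noncomputable def boxFinset (r : ℕ) : Finset (ℤ × ℤ) :=
  Finset.Ioo (-(r : ℤ)) r ×ˢ Finset.Ioo (-(r : ℤ)) r

lemma coe_boxFinset (r : ℕ) : (boxFinset r : Set (ℤ × ℤ)) = box r := by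
  ext x
  simp [boxFinset, box, abs_lt]

lemma mod3Sublattice_inter_box (r : ℕ) :
    mod3Sublattice ∩ box r = ↑{x ∈ boxFinset r | 3 ∣ x.1 + x.2} := by
  rw [Finset.coe_filter, ← coe_boxFinset, Set.inter_comm]
  rfl

open Finset in
lemma card_filter_product_eq_sum {α β : Type*} (s : Finset α) (t : Finset β) (p : α × β → Prop)
    [DecidablePred p] : #{x ∈ s ×ˢ t | p x} = ∑ a ∈ s, #{b ∈ t | p (a, b)} := by
  simp only [card_filter, sum_product]

open Finset in
lemma card_filter_dvd_add_Ioo (a b c : ℤ) (h : a < b) :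
    |3 * (#{y ∈ Ioo a b | 3 ∣ c + y} : ℤ) - (b - a - 1)| ≤ 2 := by
  have himage : {y ∈ Ioo a b | 3 ∣ c + y} =
      (Ico ((a + c + 3) / 3) ((b + c + 2) / 3)).image (fun m => 3 * m - c) := by
    ext y
    simp only [mem_filter, mem_Ioo, mem_Ico, mem_image]
    constructor
    · rintro ⟨⟨hay, hyb⟩, hdvd⟩
      exact ⟨(y + c) / 3, by omega, by omega⟩
    · rintro ⟨m, ⟨hlo, hhi⟩, rfl⟩
      omega
  rw [himage, card_image_of_injective _ (fun m₁ m₂ hm => by omega), Int.card_Ico, abs_le]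
  omega

open Finset in
lemma abs_three_mul_ncard_mod3Sublattice_inter_box_sub_le {r : ℕ} (hr : 0 < r) :
    |3 * ((mod3Sublattice ∩ box r).ncard : ℤ) - (2 * r - 1) ^ 2| ≤ 2 * (2 * (r : ℤ) - 1) := by
  have hrow : ∀ x ∈ Ioo (-(r : ℤ)) r,
      |3 * (#{y ∈ Ioo (-(r : ℤ)) r | 3 ∣ x + y} : ℤ) - (2 * r - 1)| ≤ 2 := fun x _ => by
    simpa [two_mul, sub_eq_add_neg, add_assoc] using
      card_filter_dvd_add_Ioo (-(r : ℤ)) r x (by omega)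
  have hcard : (#(Ioo (-(r : ℤ)) r) : ℤ) = 2 * r - 1 := by
    rw [Int.card_Ioo]; omega
  rw [mod3Sublattice_inter_box, Set.ncard_coe_finset, boxFinset, card_filter_product_eq_sum]
  calc |3 * ((∑ x ∈ Ioo (-(r : ℤ)) r, #{y ∈ Ioo (-(r : ℤ)) r | 3 ∣ x + y} : ℕ) : ℤ)
          - (2 * r - 1) ^ 2|
      = |∑ x ∈ Ioo (-(r : ℤ)) r,
          (3 * (#{y ∈ Ioo (-(r : ℤ)) r | 3 ∣ x + y} : ℤ) - (2 * r - 1))| := by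
        rw [sum_sub_distrib, ← mul_sum, sum_const, nsmul_eq_mul, hcard]; push_cast; ring_nf
    _ ≤ ∑ x ∈ Ioo (-(r : ℤ)) r, 2 := (abs_sum_le_sum_abs _ _).trans (sum_le_sum hrow)
    _ = 2 * (2 * r - 1) := by rw [sum_const, nsmul_eq_mul, hcard]; ring

lemma abs_three_mul_ncard_mod3Sublattice_inter_box_sub_le_real {r : ℕ} (hr : 0 < r) :
    |3 * ((mod3Sublattice ∩ box r).ncard : ℝ) - (2 * r - 1) ^ 2| ≤ 2 * (2 * (r : ℝ) - 1) := by
  have h := Int.cast_le (R := ℝ) |>.2 (abs_three_mul_ncard_mod3Sublattice_inter_box_sub_le hr)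
  push_cast at h
  exact h

/-- The corner `z ∈ mod3Sublattice` of the triangle `{z, z + (1,0), z + (1,1)}` containing `x`. -/
def triangleBase (x : ℤ × ℤ) : ℤ × ℤ :=
  if (x.1 + x.2) % 3 = 0 then x
  else if (x.1 + x.2) % 3 = 1 then (x.1 - 1, x.2)
  else (x.1 - 1, x.2 - 1)

lemma triangleBase_mem_mod3Sublattice (x : ℤ × ℤ) : triangleBase x ∈ mod3Sublattice := by
  unfold triangleBase mod3Sublattice
  split_ifs <;> simp only [Set.mem_ofPred_eq] <;> omega

lemma triangleBase_mem_box {x : ℤ × ℤ} {r : ℕ} (hx : x ∈ box r) :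
    triangleBase x ∈ box (r + 1) := by
  simp only [box, Set.mem_ofPred_eq, abs_lt] at hx ⊢
  unfold triangleBase
  push_cast
  split_ifs <;> omega

lemma isTriNbr_of_triangleBase_eq {x y : ℤ × ℤ} (h : triangleBase x = triangleBase y)
    (hne : x ≠ y) : IsTriNbr x y := by
  rw [Ne, Prod.ext_iff] at hne
  simp only [triangleBase, Prod.ext_iff] at h
  simp only [IsTriNbr, Set.mem_insert_iff, Set.mem_singleton_iff, Prod.ext_iff, Prod.fst_sub,
    Prod.snd_sub]
  split_ifs at h <;> omega

lemma ncard_inter_box_le_of_forall_not_isTriNbr {S : Set (ℤ × ℤ)}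
    (hS : ∀ x ∈ S, ∀ y ∈ S, ¬ IsTriNbr x y) (r : ℕ) :
    (S ∩ box r).ncard ≤ (mod3Sublattice ∩ box (r + 1)).ncard := by
  have hinj : Set.InjOn triangleBase (S ∩ box r) := fun x hx y hy h =>
    by_contra fun hne => hS x hx.1 y hy.1 (isTriNbr_of_triangleBase_eq h hne)
  rw [← hinj.ncard_image]
  refine Set.ncard_le_ncard ?_ ?_
  · rintro _ ⟨x, ⟨-, hx⟩, rfl⟩
    exact ⟨triangleBase_mem_mod3Sublattice x, triangleBase_mem_box hx⟩
  · rw [mod3Sublattice_inter_box]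
    exact Finset.finite_toSet _

noncomputable def densityRatio (S : Set (ℤ × ℤ)) (r : ℕ) : ℝ :=
  (S ∩ box r).ncard / (2 * (r : ℝ) - 1) ^ 2

lemma tendsto_of_abs_sub_le_div {u : ℕ → ℝ} {a C : ℝ} (h : ∀ᶠ n in atTop, |u n - a| ≤ C / n) :
    Tendsto u atTop (𝓝 a) :=
  tendsto_iff_norm_sub_tendsto_zero.2 <|
    squeeze_zero' (.of_forall fun _ => norm_nonneg _) h (tendsto_const_div_atTop_nhds_zero_nat C)

lemma limsup_le_of_le_add_div {u : ℕ → ℝ} {a C : ℝ} (hu : ∀ n, 0 ≤ u n)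
    (h : ∀ᶠ n in atTop, u n ≤ a + C / n) : limsup u atTop ≤ a := by
  have hv : Tendsto (fun n : ℕ => a + C / n) atTop (𝓝 a) := by
    simpa using tendsto_const_nhds.add (tendsto_const_div_atTop_nhds_zero_nat C)
  exact (limsup_le_limsup h (isCoboundedUnder_le_of_le atTop hu) hv.isBoundedUnder_le).trans
    hv.limsup_eq.le

lemma abs_densityRatio_mod3Sublattice_sub_le {r : ℕ} (hr : 0 < r) :
    |densityRatio mod3Sublattice r - 1 / 3| ≤ 1 / r := by
  have hr' : (1 : ℝ) ≤ r := by exact_mod_cast hr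
  have hcount := abs_three_mul_ncard_mod3Sublattice_inter_box_sub_le_real hr
  have hsplit : densityRatio mod3Sublattice r - 1 / 3 =
      (3 * ((mod3Sublattice ∩ box r).ncard : ℝ) - (2 * r - 1) ^ 2) / (3 * (2 * r - 1) ^ 2) := by
    have : (2 * (r : ℝ) - 1) ≠ 0 := by linarith
    rw [densityRatio]
    field_simp
  have hn : (0 : ℝ) < 3 * (2 * r - 1) ^ 2 := by nlinarith
  rw [hsplit, abs_div, abs_of_pos hn, div_le_div_iff₀ hn (by positivity)]
  nlinarith [mul_le_mul_of_nonneg_right hcount (by positivity : (0 : ℝ) ≤ r)]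

lemma densityRatio_le_of_forall_not_isTriNbr {S : Set (ℤ × ℤ)}
    (hS : ∀ x ∈ S, ∀ y ∈ S, ¬ IsTriNbr x y) {r : ℕ} (hr : 0 < r) :
    densityRatio S r ≤ 1 / 3 + 5 / r := by
  have hr' : (1 : ℝ) ≤ r := by exact_mod_cast hr
  have hle : ((S ∩ box r).ncard : ℝ) ≤ (mod3Sublattice ∩ box (r + 1)).ncard := by
    exact_mod_cast ncard_inter_box_le_of_forall_not_isTriNbr hS r
  have hcount := abs_le.1 (abs_three_mul_ncard_mod3Sublattice_inter_box_sub_le_real r.succ_pos)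
  push_cast at hcount
  rw [densityRatio, div_le_iff₀ (by nlinarith)]
  field_simp
  nlinarith

theorem delta6_zero :
    (∀ S : Set (ℤ × ℤ), (∀ x ∈ S, ∀ y ∈ S, ¬ IsTriNbr x y) → upperDensity S ≤ 1 / 3) ∧
    (∀ x ∈ {x : ℤ × ℤ | 3 ∣ (x.1 + x.2)}, ∀ y ∈ {x : ℤ × ℤ | 3 ∣ (x.1 + x.2)},
      ¬ IsTriNbr x y) ∧
    HasDensity {x : ℤ × ℤ | 3 ∣ (x.1 + x.2)} (1 / 3) := by
  refine ⟨fun S hS => ?_, fun x hx y hy => not_isTriNbr_of_mem_mod3Sublattice hx hy, ?_⟩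
  · exact limsup_le_of_le_add_div (fun r => div_nonneg (Nat.cast_nonneg _) (sq_nonneg _))
      ((eventually_gt_atTop 0).mono fun r hr => densityRatio_le_of_forall_not_isTriNbr hS hr)
  · exact tendsto_of_abs_sub_le_div
      ((eventually_gt_atTop 0).mono fun r hr => abs_densityRatio_mod3Sublattice_sub_le hr)
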